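/- Suppose n ≥ 3 and β_i ≠ 0 and β_j ≠ 0 for two distinct indices i ≠ j with 4 ≤ i, j ≤ n. Then every even derivation of the Leibniz superalgebra H(β₄,…,β_n,δ,γ) is nilpotent. In particular, there is no non-nilpotent solvable Leibniz superalgebra whose nilradical is such an H(β₄,…,β_n,δ,γ). -/

import Mathlib

/-!
Let `R = [·, e₁]`. Since `e₁ = [y₁, y₁]`, an even derivation `d` with `d y₁ ≡ b y₁` modulo
`span {y₂, …}` satisfies `d e₁ = 2b e₁ + w` with `w ∈ span {e₃, …}`, and such `w`
right-annihilate the whole algebra. Hence `[d, R] = 2b R`, and since `e_k = R^(k-2) e₁` for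
`k ≥ 3` this gives `d e_k = (k - 1) 2b e_k + R^(k-2) w`. Writing `d e₂ ≡ c₁ e₁ + c₂ e₂` modulo
`span {e₃, …}`, the identity `d [e₁, e₂] = [d e₁, e₂] + [e₁, d e₂]` becomes
`∑ β_k ((k - 2) 2b - c₂) e_k = c₁ e₃`, the terms `β_k R^(k-2) w` cancelling on both sides.
Two nonzero `β`'s at distinct indices force `b = c₂ = 0`; then `d` commutes with `R`, so it
maps `span {e_m, y_m : m > k}` into `span {e_m, y_m : m > k + 1}`, and `dⁿ = 0`.
-/

open Submodule Set

theorem Module.End.pow_eq_zero_of_le_comap {R M : Type*} [Semiring R] [AddCommMonoid M]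
    [Module R M] {f : Module.End R M} {S : ℕ → Submodule R M}
    (hf : ∀ k, S k ≤ (S (k + 1)).comap f) {N : ℕ} (h0 : S 0 = ⊤) (hN : S N = ⊥) :
    f ^ N = 0 := by
  have hpow : ∀ k, S 0 ≤ (S k).comap (f ^ k) := by
    intro k
    induction k with
    | zero => intro x hx; simpa using hx
    | succ k ih => intro x hx; rw [mem_comap, pow_succ', Module.End.mul_apply]; exact hf k (ih hx)
  ext x
  simpa [hN] using hpow N (h0 ▸ mem_top : x ∈ S 0)

theorem mul_pow_of_mul_eq_mul_add_smul {K A : Type*} [CommSemiring K] [Semiring A] [Algebra K A]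
    {d r : A} {a : K} (h : d * r = r * d + a • r) (k : ℕ) :
    d * r ^ k = r ^ k * d + (k * a) • r ^ k := by
  induction k with
  | zero => simp
  | succ k ih =>
    rw [pow_succ, ← mul_assoc, ih, add_mul, mul_assoc, h, mul_add, ← mul_assoc, smul_mul_assoc,
      mul_smul_comm, ← pow_succ, Nat.cast_succ, add_mul, one_mul, add_smul]
    abel

theorem LinearIndepOn.eq_zero_of_sum_eq_smul {ι R M : Type*} [Ring R] [AddCommGroup M]
    [Module R M] [DecidableEq ι] {v : ι → M} {s : Finset ι} {i : ι} {g : ι → R} {c : R}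
    (hv : LinearIndepOn R v ↑(insert i s)) (hi : i ∉ s)
    (h : ∑ k ∈ s, g k • v k = c • v i) :
    c = 0 ∧ ∀ k ∈ s, g k = 0 := by
  have hzero := linearIndepOn_iff'.1 hv (insert i s) (Function.update g i (-c)) subset_rfl (by
    rw [Finset.sum_insert hi, Function.update_self, Finset.sum_congr rfl fun k hk =>
      by rw [Function.update_of_ne (ne_of_mem_of_not_mem hk hi)], h, neg_smul, neg_add_cancel])
  refine ⟨by simpa using hzero i (Finset.mem_insert_self i s), fun k hk => ?_⟩
  simpa [Function.update_of_ne (ne_of_mem_of_not_mem hk hi)] using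
    hzero k (Finset.mem_insert_of_mem hk)

section TailSpan

variable (R : Type*) {M : Type*} [Semiring R] [AddCommMonoid M] [Module R M]

def tailSpan (f : ℕ → M) (k : ℕ) : Submodule R M := span R (f '' Ioi k)

def indexFiltration (e y : ℕ → M) (k : ℕ) : Submodule R M := tailSpan R e k ⊔ tailSpan R y k

variable {R} {f e y : ℕ → M}

theorem mem_tailSpan {k m : ℕ} (h : k < m) : f m ∈ tailSpan R f k := subset_span ⟨m, h, rfl⟩

theorem tailSpan_le_iff {k : ℕ} {N : Submodule R M} :
    tailSpan R f k ≤ N ↔ ∀ m, k < m → f m ∈ N := by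
  simp [tailSpan, span_le, subset_def]

theorem tailSpan_antitone : Antitone (tailSpan R f) :=
  fun _ _ h => span_mono (image_mono (Ioi_subset_Ioi h))

theorem tailSpan_eq_bot {N : ℕ} (h : ∀ m, N < m → f m = 0) : tailSpan R f N = ⊥ :=
  eq_bot_iff.2 (tailSpan_le_iff.2 fun m hm => by simp [h m hm])

theorem tailSpan_eq_sup (k : ℕ) : tailSpan R f k = R ∙ f (k + 1) ⊔ tailSpan R f (k + 1) := by
  rw [tailSpan, tailSpan, ← span_insert, ← image_insert_eq]
  congr 2
  ext m
  simp only [mem_Ioi, mem_insert_iff]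
  omega

theorem span_range_le_tailSpan {n : ℕ} {v : Fin n → M} (h : ∀ i : Fin n, v i = f (i + 1)) :
    span R (range v) ≤ tailSpan R f 0 :=
  span_le.2 <| by rintro _ ⟨i, rfl⟩; exact h i ▸ mem_tailSpan (Nat.succ_pos i)

theorem indexFiltration_antitone : Antitone (indexFiltration R e y) :=
  fun _ _ h => sup_le_sup (tailSpan_antitone h) (tailSpan_antitone h)

theorem indexFiltration_eq_bot {N : ℕ} (he : ∀ m, N < m → e m = 0)
    (hy : ∀ m, N < m → y m = 0) :
    indexFiltration R e y N = ⊥ := by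
  rw [indexFiltration, tailSpan_eq_bot he, tailSpan_eq_bot hy, bot_sup_eq]

theorem indexFiltration_zero_eq_top {n : ℕ} (b : Module.Basis (Fin n ⊕ Fin n) R M)
    (he : ∀ i, b (.inl i) = e (i + 1)) (hy : ∀ i, b (.inr i) = y (i + 1)) :
    indexFiltration R e y 0 = ⊤ := by
  rw [eq_top_iff, ← b.span_eq, span_le]
  rintro _ ⟨i | i, rfl⟩
  · exact mem_sup_left (he i ▸ mem_tailSpan (Nat.succ_pos i))
  · exact mem_sup_right (hy i ▸ mem_tailSpan (Nat.succ_pos i))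

theorem le_comap_indexFiltration {g : M →ₗ[R] M}
    (he : ∀ m, 1 ≤ m → g (e m) ∈ indexFiltration R e y m)
    (hy : ∀ m, 1 ≤ m → g (y m) ∈ indexFiltration R e y m) (k : ℕ) :
    indexFiltration R e y k ≤ (indexFiltration R e y (k + 1)).comap g := by
  refine sup_le (tailSpan_le_iff.2 fun m hm => ?_) (tailSpan_le_iff.2 fun m hm => ?_)
  · exact indexFiltration_antitone hm (he m (by omega))
  · exact indexFiltration_antitone hm (hy m (by omega))

theorem linearIndepOn_Icc_of_basis {n : ℕ} (b : Module.Basis (Fin n ⊕ Fin n) R M)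
    (he : ∀ i, b (.inl i) = e (i + 1)) : LinearIndepOn R e (Icc 1 n) := by
  have hinj : Function.Injective fun i : Fin n => (i : ℕ) + 1 := fun i j h => by
    simpa [Fin.ext_iff] using h
  refine LinearIndepOn.mono ((linearIndepOn_range_iff hinj e).2 ?_) fun m hm => ?_
  · convert b.linearIndependent.comp _ Sum.inl_injective
    exact funext fun i => (he i).symm
  · exact ⟨⟨m - 1, by grind⟩, by grind⟩

end TailSpan

section TailSpanRing

variable {R M : Type*} [Ring R] [AddCommGroup M] [Module R M] {f : ℕ → M}

theorem exists_sub_smul_mem_tailSpan {k : ℕ} {v : M} (hv : v ∈ tailSpan R f k) :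
    ∃ c : R, v - c • f (k + 1) ∈ tailSpan R f (k + 1) := by
  rw [tailSpan_eq_sup, mem_sup] at hv
  obtain ⟨_, hx, u, hu, rfl⟩ := hv
  obtain ⟨c, rfl⟩ := mem_span_singleton.1 hx
  exact ⟨c, by simpa using hu⟩

end TailSpanRing

/-- Relations of table (4) for `H(β₄,…,β_n,δ,γ)` with even basis `e 1, …, e n` and odd basis
`y 1, …, y n`, both families extended by zero outside `1 ≤ k ≤ n`; `br x y` is `[x, y]`. -/
structure HTable {K V : Type*} [Field K] [AddCommGroup V] [Module K V] (n : ℕ) (β : ℕ → K)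
    (e y : ℕ → V) (br : V →ₗ[K] V →ₗ[K] V) : Prop where
  e_eq_zero : ∀ k, n < k → e k = 0
  y_eq_zero : ∀ k, n < k → y k = 0
  e_mul_e_one : ∀ i, 1 ≤ i → i ≤ n →
    br (e i) (e 1) = if i = 1 then e 3 else if i = 2 then 0 else e (i + 1)
  e_one_mul_e_two : br (e 1) (e 2) = ∑ k ∈ Finset.Icc 4 n, β k • e k
  e_mul_e_two : ∀ i, 3 ≤ i → i ≤ n →
    br (e i) (e 2) = ∑ k ∈ Finset.Icc 4 n, β k • e (i + k - 2)
  e_mul_e : ∀ i j, 1 ≤ i → i ≤ n → 3 ≤ j → j ≤ n → br (e i) (e j) = 0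
  y_mul_e_one : ∀ j, 1 ≤ j → j ≤ n → br (y j) (e 1) = y (j + 1)
  y_mul_e : ∀ j i, 1 ≤ j → j ≤ n → 3 ≤ i → i ≤ n → br (y j) (e i) = 0
  y_mul_y_one : ∀ j, 1 ≤ j → j ≤ n → br (y j) (y 1) = if j = 1 then e 1 else e (j + 1)
  y_mul_y : ∀ j k, 1 ≤ j → j ≤ n → 2 ≤ k → k ≤ n → br (y j) (y k) = 0

namespace HTable

variable {K V : Type*} [Field K] [AddCommGroup V] [Module K V] {n : ℕ} {β : ℕ → K}
  {e y : ℕ → V} {br : V →ₗ[K] V →ₗ[K] V}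

theorem e_one_mul_e_one (H : HTable n β e y br) : br (e 1) (e 1) = e 3 := by
  rcases le_or_gt 1 n with h | h
  · rw [H.e_mul_e_one 1 le_rfl h, if_pos rfl]
  · simp [H.e_eq_zero 1 h, H.e_eq_zero 3 (by omega)]

theorem e_two_mul_e_one (H : HTable n β e y br) : br (e 2) (e 1) = 0 := by
  rcases le_or_gt 2 n with h | h
  · rw [H.e_mul_e_one 2 (by omega) h, if_neg (by omega), if_pos rfl]
  · rw [H.e_eq_zero 2 h, map_zero, LinearMap.zero_apply]

theorem e_mul_e_one_of_three_le (H : HTable n β e y br) {i : ℕ} (hi : 3 ≤ i) :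
    br (e i) (e 1) = e (i + 1) := by
  rcases le_or_gt i n with h | h
  · rw [H.e_mul_e_one i (by omega) h, if_neg (by omega), if_neg (by omega)]
  · rw [H.e_eq_zero i h, H.e_eq_zero (i + 1) (by omega), map_zero, LinearMap.zero_apply]

theorem y_mul_e_one_of_one_le (H : HTable n β e y br) {j : ℕ} (hj : 1 ≤ j) :
    br (y j) (e 1) = y (j + 1) := by
  rcases le_or_gt j n with h | h
  · exact H.y_mul_e_one j hj h
  · rw [H.y_eq_zero j h, H.y_eq_zero (j + 1) (by omega), map_zero, LinearMap.zero_apply]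

theorem e_mul_e_of_three_le (H : HTable n β e y br) {i j : ℕ} (hi : 1 ≤ i) (hj : 3 ≤ j) :
    br (e i) (e j) = 0 := by
  by_cases h : i ≤ n ∧ j ≤ n
  · exact H.e_mul_e i j hi h.1 hj h.2
  · rcases not_and_or.1 h with h | h
    · rw [H.e_eq_zero i (by omega), map_zero, LinearMap.zero_apply]
    · rw [H.e_eq_zero j (by omega), map_zero]

theorem y_mul_e_of_three_le (H : HTable n β e y br) {i j : ℕ} (hj : 1 ≤ j) (hi : 3 ≤ i) :
    br (y j) (e i) = 0 := by
  by_cases h : j ≤ n ∧ i ≤ n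
  · exact H.y_mul_e j i hj h.1 hi h.2
  · rcases not_and_or.1 h with h | h
    · rw [H.y_eq_zero j (by omega), map_zero, LinearMap.zero_apply]
    · rw [H.e_eq_zero i (by omega), map_zero]

theorem y_one_mul_y_one (H : HTable n β e y br) : br (y 1) (y 1) = e 1 := by
  rcases le_or_gt 1 n with h | h
  · rw [H.y_mul_y_one 1 le_rfl h, if_pos rfl]
  · simp [H.y_eq_zero 1 h, H.e_eq_zero 1 h]

theorem pow_mulRight_e (H : HTable n β e y br) {t : ℕ} (ht : 3 ≤ t) (k : ℕ) :
    (br.flip (e 1) ^ k) (e t) = e (t + k) := by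
  induction k with
  | zero => rfl
  | succ k ih =>
    rw [pow_succ', Module.End.mul_apply, ih, LinearMap.flip_apply,
      H.e_mul_e_one_of_three_le (by omega), add_assoc]

theorem pow_mulRight_e_one (H : HTable n β e y br) {m : ℕ} (hm : 3 ≤ m) :
    (br.flip (e 1) ^ (m - 2)) (e 1) = e m := by
  obtain ⟨k, rfl⟩ : ∃ k, m = k + 3 := ⟨m - 3, by omega⟩
  rw [show k + 3 - 2 = k + 1 by omega, pow_succ, Module.End.mul_apply, LinearMap.flip_apply,
    H.e_one_mul_e_one, H.pow_mulRight_e le_rfl, add_comm]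

theorem pow_mulRight_y (H : HTable n β e y br) {j : ℕ} (hj : 1 ≤ j) (k : ℕ) :
    (br.flip (e 1) ^ k) (y j) = y (j + k) := by
  induction k with
  | zero => rfl
  | succ k ih =>
    rw [pow_succ', Module.End.mul_apply, ih, LinearMap.flip_apply,
      H.y_mul_e_one_of_one_le (by omega), add_assoc]

theorem mulRight_le_comap (H : HTable n β e y br) (k : ℕ) :
    indexFiltration K e y k ≤ (indexFiltration K e y (k + 1)).comap (br.flip (e 1)) := by
  refine le_comap_indexFiltration (fun m hm => ?_) (fun m hm => ?_) k <;> rw [LinearMap.flip_apply]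
  · rcases (by omega : m = 1 ∨ m = 2 ∨ 3 ≤ m) with rfl | rfl | hm
    · rw [H.e_one_mul_e_one]
      exact mem_sup_left (mem_tailSpan (by norm_num))
    · rw [H.e_two_mul_e_one]
      exact zero_mem _
    · rw [H.e_mul_e_one_of_three_le hm]
      exact mem_sup_left (mem_tailSpan (by omega))
  · rw [H.y_mul_e_one_of_one_le hm]
    exact mem_sup_right (mem_tailSpan (by omega))

theorem pow_mulRight_le_comap (H : HTable n β e y br) (j k : ℕ) :
    indexFiltration K e y k ≤ (indexFiltration K e y (k + j)).comap (br.flip (e 1) ^ j) := by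
  induction j with
  | zero => intro x hx; simpa using hx
  | succ j ih =>
    intro x hx
    rw [mem_comap, pow_succ', Module.End.mul_apply, ← add_assoc]
    exact H.mulRight_le_comap (k + j) (ih hx)

theorem mul_eq_zero_of_mem_tailSpan_two (H : HTable n β e y br) {x w : V}
    (hx : x ∈ indexFiltration K e y 0) (hw : w ∈ tailSpan K e 2) : br x w = 0 := by
  have he : ∀ i, 0 < i → br (e i) w = 0 := fun i hi =>
    (tailSpan_le_iff (N := LinearMap.ker (br (e i)))).2
      (fun j hj => H.e_mul_e_of_three_le hi hj) hw
  have hy : ∀ j, 0 < j → br (y j) w = 0 := fun j hj =>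
    (tailSpan_le_iff (N := LinearMap.ker (br (y j)))).2
      (fun i hi => H.y_mul_e_of_three_le hj hi) hw
  exact (sup_le (tailSpan_le_iff.2 he) (tailSpan_le_iff.2 hy) :
    indexFiltration K e y 0 ≤ LinearMap.ker (br.flip w)) hx

theorem mul_e_two_eq_sum (H : HTable n β e y br) {w : V} (hw : w ∈ tailSpan K e 2) :
    br w (e 2) = ∑ k ∈ Finset.Icc 4 n, β k • (br.flip (e 1) ^ (k - 2)) w := by
  suffices hle : tailSpan K e 2 ≤ LinearMap.eqLocus (br.flip (e 2))
      (∑ k ∈ Finset.Icc 4 n, β k • br.flip (e 1) ^ (k - 2)) by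
    simpa using hle hw
  refine tailSpan_le_iff.2 fun m hm => ?_
  rw [LinearMap.mem_eqLocus, LinearMap.flip_apply, LinearMap.sum_apply]
  rcases le_or_gt m n with h | h
  · rw [H.e_mul_e_two m hm h]
    refine Finset.sum_congr rfl fun k hk => ?_
    rw [LinearMap.smul_apply, H.pow_mulRight_e hm]
    congr 2
    grind
  · simp [H.e_eq_zero m h]

theorem y_mul_y_one_mem (H : HTable n β e y br) {s : V} (hs : s ∈ tailSpan K y 1) :
    br s (y 1) ∈ tailSpan K e 2 := by
  refine (tailSpan_le_iff (N := (tailSpan K e 2).comap (br.flip (y 1)))).2 (fun m hm => ?_) hs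
  rw [mem_comap, LinearMap.flip_apply]
  rcases le_or_gt m n with h | h
  · rw [H.y_mul_y_one m (by omega) h, if_neg (by omega)]
    exact mem_tailSpan (by omega)
  · simp [H.y_eq_zero m h]

theorem y_one_mul_eq_zero (H : HTable n β e y br) {s : V} (hs : s ∈ tailSpan K y 1) :
    br (y 1) s = 0 := by
  refine (tailSpan_le_iff (N := LinearMap.ker (br (y 1)))).2 (fun m hm => ?_) hs
  rcases le_or_gt m n with h | h
  · exact H.y_mul_y 1 m le_rfl (by omega) hm h
  · simp [H.y_eq_zero m h]

variable {d : Module.End K V}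

theorem derivation_e_one_sub_mem (H : HTable n β e y br)
    (hd : ∀ u v, d (br u v) = br (d u) v + br u (d v)) {b : K}
    (hb : d (y 1) - b • y 1 ∈ tailSpan K y 1) :
    d (e 1) - (2 * b) • e 1 ∈ tailSpan K e 2 := by
  obtain ⟨s, hs, hys⟩ : ∃ s ∈ tailSpan K y 1, d (y 1) = b • y 1 + s :=
    ⟨_, hb, (add_sub_cancel _ _).symm⟩
  rw [← H.y_one_mul_y_one, hd, hys]
  simp only [map_add, map_smul, LinearMap.add_apply, LinearMap.smul_apply, H.y_one_mul_y_one,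
    H.y_one_mul_eq_zero hs]
  convert H.y_mul_y_one_mem hs using 1
  module

theorem derivation_mul_mulRight (H : HTable n β e y br)
    (hd : ∀ u v, d (br u v) = br (d u) v + br u (d v)) (hspan : indexFiltration K e y 0 = ⊤)
    {a : K} (ha : d (e 1) - a • e 1 ∈ tailSpan K e 2) :
    d * br.flip (e 1) = br.flip (e 1) * d + a • br.flip (e 1) := by
  ext x
  have hx : br x (d (e 1)) = a • br x (e 1) := by
    simpa [sub_eq_zero] using H.mul_eq_zero_of_mem_tailSpan_two (hspan ▸ mem_top) ha
  simp [hd, hx]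

theorem derivation_e_of_three_le (H : HTable n β e y br)
    (hd : ∀ u v, d (br u v) = br (d u) v + br u (d v)) (hspan : indexFiltration K e y 0 = ⊤)
    {a : K} (ha : d (e 1) - a • e 1 ∈ tailSpan K e 2) {m : ℕ} (hm : 3 ≤ m) :
    d (e m) = (((m : K) - 1) * a) • e m + (br.flip (e 1) ^ (m - 2)) (d (e 1) - a • e 1) := by
  have hcomm := LinearMap.congr_fun
    (mul_pow_of_mul_eq_mul_add_smul (H.derivation_mul_mulRight hd hspan ha) (m - 2)) (e 1)
  simp only [Module.End.mul_apply, LinearMap.add_apply, LinearMap.smul_apply,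
    H.pow_mulRight_e_one hm] at hcomm
  rw [hcomm, map_sub, map_smul, H.pow_mulRight_e_one hm, Nat.cast_sub (by omega)]
  module

theorem derivation_relation (H : HTable n β e y br)
    (hd : ∀ u v, d (br u v) = br (d u) v + br u (d v)) (hspan : indexFiltration K e y 0 = ⊤)
    {a c₁ c₂ : K} (ha : d (e 1) - a • e 1 ∈ tailSpan K e 2)
    (hc : d (e 2) - c₁ • e 1 - c₂ • e 2 ∈ tailSpan K e 2) :
    ∑ k ∈ Finset.Icc 4 n, (β k * (((k : K) - 2) * a - c₂)) • e k = c₁ • e 3 := by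
  set w := d (e 1) - a • e 1
  set z := ∑ k ∈ Finset.Icc 4 n, β k • e k
  set t := ∑ k ∈ Finset.Icc 4 n, β k • (br.flip (e 1) ^ (k - 2)) w
  have hleft :
      d (br (e 1) (e 2)) = ∑ k ∈ Finset.Icc 4 n, β k • ((((k : K) - 1) * a) • e k) + t := by
    rw [H.e_one_mul_e_two, map_sum, ← Finset.sum_add_distrib]
    refine Finset.sum_congr rfl fun k hk => ?_
    rw [map_smul, H.derivation_e_of_three_le hd hspan ha (by grind), smul_add]
  have hright : d (br (e 1) (e 2)) = a • z + t + c₁ • e 3 + c₂ • z := by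
    rw [hd, show d (e 1) = a • e 1 + w by simp [w],
      show d (e 2) = c₁ • e 1 + c₂ • e 2 + (d (e 2) - c₁ • e 1 - c₂ • e 2) by abel]
    simp only [map_add, map_smul, LinearMap.add_apply, LinearMap.smul_apply, H.e_one_mul_e_two,
      H.e_one_mul_e_one, H.mul_e_two_eq_sum ha,
      H.mul_eq_zero_of_mem_tailSpan_two (hspan ▸ mem_top : e 1 ∈ _) hc]
    abel
  have hsum : ∑ k ∈ Finset.Icc 4 n, (β k * (((k : K) - 2) * a - c₂)) • e k =
      ∑ k ∈ Finset.Icc 4 n, β k • ((((k : K) - 1) * a) • e k) - (a + c₂) • z := by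
    rw [Finset.smul_sum, ← Finset.sum_sub_distrib]
    exact Finset.sum_congr rfl fun k _ => by module
  rw [hsum]
  linear_combination (norm := module) hleft.symm.trans hright

theorem le_comap_derivation_of_mem (H : HTable n β e y br)
    (hd : ∀ u v, d (br u v) = br (d u) v + br u (d v)) (hspan : indexFiltration K e y 0 = ⊤)
    (he₁ : d (e 1) ∈ tailSpan K e 2) (he₂ : d (e 2) ∈ tailSpan K e 2)
    (hy₁ : d (y 1) ∈ tailSpan K y 1) (k : ℕ) :
    indexFiltration K e y k ≤ (indexFiltration K e y (k + 1)).comap d := by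
  have ha : d (e 1) - (0 : K) • e 1 ∈ tailSpan K e 2 := by simpa using he₁
  have hcomm : Commute d (br.flip (e 1)) :=
    (by simpa using H.derivation_mul_mulRight hd hspan ha : d * _ = _ * d)
  refine le_comap_indexFiltration (fun m hm => ?_) (fun m hm => ?_) k
  · rcases (by omega : m = 1 ∨ m = 2 ∨ 3 ≤ m) with rfl | rfl | hm
    · exact mem_sup_left (tailSpan_antitone (by norm_num) he₁)
    · exact mem_sup_left he₂
    · rw [H.derivation_e_of_three_le hd hspan ha hm, zero_smul, sub_zero, mul_zero, zero_smul,
        zero_add]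
      simpa [show 2 + (m - 2) = m by omega] using
        H.pow_mulRight_le_comap (m - 2) 2 (mem_sup_left he₁)
  · rw [← add_tsub_cancel_of_le hm, ← H.pow_mulRight_y le_rfl, ← Module.End.mul_apply,
      (hcomm.pow_right _).eq, Module.End.mul_apply]
    exact H.pow_mulRight_le_comap (m - 1) 1 (mem_sup_right hy₁)

theorem le_comap_derivation [CharZero K] (H : HTable n β e y br)
    (hd : ∀ u v, d (br u v) = br (d u) v + br u (d v)) (hspan : indexFiltration K e y 0 = ⊤)
    (hli : LinearIndepOn K e (Set.Icc 3 n))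
    (hβ : ∃ p q, p ≠ q ∧ 4 ≤ p ∧ p ≤ n ∧ 4 ≤ q ∧ q ≤ n ∧ β p ≠ 0 ∧ β q ≠ 0)
    (he₂ : d (e 2) ∈ tailSpan K e 0) (hy₁ : d (y 1) ∈ tailSpan K y 0) (k : ℕ) :
    indexFiltration K e y k ≤ (indexFiltration K e y (k + 1)).comap d := by
  obtain ⟨p, q, hpq, hp4, hpn, hq4, hqn, hβp, hβq⟩ := hβ
  obtain ⟨b, hb⟩ := exists_sub_smul_mem_tailSpan hy₁
  obtain ⟨c₁, hc₁⟩ := exists_sub_smul_mem_tailSpan he₂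
  obtain ⟨c₂, hc₂⟩ := exists_sub_smul_mem_tailSpan hc₁
  have ha := H.derivation_e_one_sub_mem hd hb
  obtain ⟨hc₁0, hcoeff⟩ := LinearIndepOn.eq_zero_of_sum_eq_smul
    (hli.mono fun m hm => by
      simp only [Finset.coe_insert, Finset.coe_Icc, Set.mem_insert_iff, Set.mem_Icc] at hm ⊢
      omega) (by simp) (H.derivation_relation hd hspan ha hc₂)
  have hp := (mul_eq_zero.1 (hcoeff p (Finset.mem_Icc.2 ⟨hp4, hpn⟩))).resolve_left hβp
  have hq := (mul_eq_zero.1 (hcoeff q (Finset.mem_Icc.2 ⟨hq4, hqn⟩))).resolve_left hβq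
  have hb0 : b = 0 := by
    have hpq' : (p : K) - q ≠ 0 := sub_ne_zero.2 (Nat.cast_injective.ne hpq)
    have : ((p : K) - q) * (2 * b) = 0 := by linear_combination hp - hq
    simpa [hpq'] using this
  have hc₂0 : c₂ = 0 := by linear_combination -hp + ((p : K) - 2) * 2 * hb0
  subst hb0 hc₁0 hc₂0
  exact H.le_comap_derivation_of_mem hd hspan (by simpa using ha) (by simpa using hc₂)
    (by simpa using hb) k

end HTable

theorem statement10 {V : Type*} [AddCommGroup V] [Module ℂ V]
    (n : ℕ) (β : ℕ → ℂ)
    (bas : Module.Basis (Fin n ⊕ Fin n) ℂ V)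
    (eN yN : ℕ → V)
    (heN : ∀ k (h : 1 ≤ k ∧ k ≤ n), eN k = bas (Sum.inl ⟨k - 1, by omega⟩))
    (heN0 : ∀ k, ¬(1 ≤ k ∧ k ≤ n) → eN k = 0)
    (hyN : ∀ k (h : 1 ≤ k ∧ k ≤ n), yN k = bas (Sum.inr ⟨k - 1, by omega⟩))
    (hyN0 : ∀ k, ¬(1 ≤ k ∧ k ≤ n) → yN k = 0)
    (br : V →ₗ[ℂ] V →ₗ[ℂ] V)
    -- multiplication table (4):
    (hee1 : ∀ i, 1 ≤ i → i ≤ n →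
      br (eN i) (eN 1) = if i = 1 then eN 3 else if i = 2 then 0 else eN (i + 1))
    (hee2a : br (eN 1) (eN 2) = ∑ k ∈ Finset.Icc 4 n, β k • eN k)
    (hee2c : ∀ i, 3 ≤ i → i ≤ n →
      br (eN i) (eN 2) = ∑ k ∈ Finset.Icc 4 n, β k • eN (i + k - 2))
    (hee0 : ∀ i j, 1 ≤ i → i ≤ n → 3 ≤ j → j ≤ n → br (eN i) (eN j) = 0)
    (hye1 : ∀ j, 1 ≤ j → j ≤ n → br (yN j) (eN 1) = yN (j + 1))
    (hye0 : ∀ j i, 1 ≤ j → j ≤ n → 3 ≤ i → i ≤ n → br (yN j) (eN i) = 0)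
    (hyy1 : ∀ j, 1 ≤ j → j ≤ n →
      br (yN j) (yN 1) = if j = 1 then eN 1 else eN (j + 1))
    (hyy0 : ∀ j k, 1 ≤ j → j ≤ n → 2 ≤ k → k ≤ n → br (yN j) (yN k) = 0)
    -- d is an even derivation:
    (d : Module.End ℂ V)
    (hdE : ∀ x ∈ Submodule.span ℂ (Set.range fun i : Fin n => bas (Sum.inl i)),
      d x ∈ Submodule.span ℂ (Set.range fun i : Fin n => bas (Sum.inl i)))
    (hdY : ∀ x ∈ Submodule.span ℂ (Set.range fun j : Fin n => bas (Sum.inr j)),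
      d x ∈ Submodule.span ℂ (Set.range fun j : Fin n => bas (Sum.inr j)))
    (hder : ∀ u v : V, d (br u v) = br (d u) v + br u (d v))
    (hij : ∃ i j, i ≠ j ∧ 4 ≤ i ∧ i ≤ n ∧ 4 ≤ j ∧ j ≤ n ∧ β i ≠ 0 ∧ β j ≠ 0) :
    ∃ N : ℕ, d ^ N = 0 := by
  have hn : 2 ≤ n := by obtain ⟨i, -, -, hi, hin, -⟩ := hij; omega
  have H : HTable n β eN yN br := ⟨fun k hk => heN0 k (by omega), fun k hk => hyN0 k (by omega),
    hee1, hee2a, hee2c, hee0, hye1, hye0, hyy1, hyy0⟩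
  have he (i : Fin n) : bas (.inl i) = eN (i + 1) := by rw [heN (i + 1) (by omega)]; simp
  have hy (i : Fin n) : bas (.inr i) = yN (i + 1) := by rw [hyN (i + 1) (by omega)]; simp
  have hspan := indexFiltration_zero_eq_top bas he hy
  have he₂ : d (eN 2) ∈ tailSpan ℂ eN 0 := span_range_le_tailSpan he
    (hdE _ (heN 2 (by omega) ▸ subset_span ⟨_, rfl⟩))
  have hy₁ : d (yN 1) ∈ tailSpan ℂ yN 0 := span_range_le_tailSpan hy
    (hdY _ (hyN 1 (by omega) ▸ subset_span ⟨_, rfl⟩))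
  refine ⟨n, Module.End.pow_eq_zero_of_le_comap
    (H.le_comap_derivation hder hspan ((linearIndepOn_Icc_of_basis bas he).mono ?_) hij he₂ hy₁)
    hspan (indexFiltration_eq_bot H.e_eq_zero H.y_eq_zero)⟩
  exact Set.Icc_subset_Icc_left (by norm_num)
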